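/- arXiv:2212.02115 — 4 statements merged into one kernel-verified Lean document; each statement's English description precedes it below -/
import Mathlib

section
/- An abelian group D is divisible if and only if for every abelian group G containing D as a subgroup, D is a direct factor of G, i.e., there exists a subgroup H of G with G = D ⊕ H (internal direct sum). -/
/-!
A divisible group is an injective `ℤ`-module by Baer's criterion, so every embedding `f` of it
has a retraction `r`, and `ker r` is a complement of `range f`. Conversely, to divide `d` by `n`,
embed `D` into `(D × ℤ) ⧸ ⟨(d, -n)⟩`, where `d` becomes `n` times the class of `(0, 1)`;
a complement of `D` there yields a retraction, which carries this class to an `n`-th part of `d`.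
-/

open Function

namespace AddMonoidHom

variable {A B : Type*} [AddCommGroup A] [AddCommGroup B] {f : A →+ B}

theorem isCompl_range_iff_toIntLinearMap {H : AddSubgroup B} :
    IsCompl f.range H ↔ IsCompl (LinearMap.range f.toIntLinearMap) H.toIntSubmodule :=
  AddSubgroup.toIntSubmodule.isCompl_iff

theorem isCompl_range_ker_of_leftInverse {r : B →+ A} (h : LeftInverse r f) :
    IsCompl f.range r.ker := by
  let e := LinearEquiv.ofInjective f.toIntLinearMap h.injective
  have := LinearMap.isCompl_of_proj (f := e.toLinearMap ∘ₗ r.toIntLinearMap) fun ⟨_, a, rfl⟩ ↦ by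
    ext
    change (e (r (f a)) : B) = f a
    rw [h a]
    rfl
  rw [LinearEquiv.ker_comp] at this
  exact isCompl_range_iff_toIntLinearMap.mpr this

theorem exists_leftInverse_of_isCompl_range (hf : Injective f) {H : AddSubgroup B}
    (h : IsCompl f.range H) : ∃ r : B →+ A, LeftInverse r f :=
  ⟨(LinearMap.linearProjOfIsCompl _ f.toIntLinearMap hf
      (isCompl_range_iff_toIntLinearMap.mp h)).toAddMonoidHom,
    LinearMap.linearProjOfIsCompl_apply_left _ _ hf _⟩

theorem exists_isCompl_range_iff_exists_leftInverse (hf : Injective f) :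
    (∃ H : AddSubgroup B, IsCompl f.range H) ↔ ∃ r : B →+ A, LeftInverse r f :=
  ⟨fun ⟨_, h⟩ ↦ exists_leftInverse_of_isCompl_range hf h,
    fun ⟨r, h⟩ ↦ ⟨r.ker, isCompl_range_ker_of_leftInverse h⟩⟩

end AddMonoidHom

abbrev RootExtension {D : Type*} [AddCommGroup D] (d : D) (n : ℕ) : Type _ :=
  (D × ℤ) ⧸ AddSubgroup.zmultiples (d, -(n : ℤ))

namespace RootExtension

variable {D : Type*} [AddCommGroup D] (d : D) (n : ℕ)

def of : D →+ RootExtension d n :=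
  (QuotientAddGroup.mk' _).comp (AddMonoidHom.inl D ℤ)

def root : RootExtension d n :=
  QuotientAddGroup.mk (0, 1)

theorem nsmul_root : n • root d n = of d n d := by
  rw [root, ← QuotientAddGroup.mk_nsmul, of, AddMonoidHom.comp_apply, AddMonoidHom.inl_apply,
    QuotientAddGroup.mk'_apply, QuotientAddGroup.eq]
  exact ⟨1, by simp⟩

theorem of_injective (hn : n ≠ 0) : Injective (of d n) := by
  refine (injective_iff_map_eq_zero _).mpr fun a ha ↦ ?_
  obtain ⟨k, hk⟩ := (QuotientAddGroup.eq_zero_iff _).mp ha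
  obtain rfl : k = 0 := by simpa [hn] using congrArg Prod.snd hk
  simpa [eq_comm] using congrArg Prod.fst hk

theorem exists_nsmul_eq_of_leftInverse {r : RootExtension d n →+ D} (h : LeftInverse r (of d n)) :
    ∃ x, n • x = d :=
  ⟨r (root d n), by rw [← map_nsmul, nsmul_root, h]⟩

end RootExtension

theorem DivisibleBy.exists_leftInverse_of_injective {D G : Type*} [AddCommGroup D]
    [AddCommGroup G] [DivisibleBy D ℤ] (f : D →+ G) (hf : Injective f) :
    ∃ r : G →+ D, LeftInverse r f :=
  have ⟨r, hr⟩ := (Module.Baer.of_divisible D).extension_property_addMonoidHom f hf (.id D)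
  ⟨r, DFunLike.congr_fun hr⟩

/-- An abelian group `D` is divisible iff `D` is a direct factor of every abelian group
containing it (as the range of an injective homomorphism). -/
theorem divisible_iff_direct_factor {D : Type} [AddCommGroup D] :
    (∀ d : D, ∀ n : ℕ, 0 < n → ∃ x : D, n • x = d) ↔
      (∀ (G : Type) (_ : AddCommGroup G) (f : D →+ G), Function.Injective f →
        ∃ H : AddSubgroup G, f.range ⊓ H = ⊥ ∧ f.range ⊔ H = ⊤) := by
  simp_rw [← disjoint_iff, ← codisjoint_iff, ← isCompl_iff]
  constructor
  · intro hdiv G _ f hf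
    let : DivisibleBy D ℕ :=
      divisibleByOfSMulRightSurj D ℕ fun hn d ↦ hdiv d _ (Nat.pos_of_ne_zero hn)
    let := AddGroup.divisibleByIntOfDivisibleByNat D
    exact (AddMonoidHom.exists_isCompl_range_iff_exists_leftInverse hf).mpr
      (DivisibleBy.exists_leftInverse_of_injective f hf)
  · intro h d n hn
    have hof := RootExtension.of_injective d n hn.ne'
    obtain ⟨r, hr⟩ :=
      (AddMonoidHom.exists_isCompl_range_iff_exists_leftInverse hof).mp (h _ _ _ hof)
    exact RootExtension.exists_nsmul_eq_of_leftInverse d n hr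
end

section
/- Let G ⊆ D be abelian groups with D divisible. Let n be a positive integer and suppose |μ_n(D/G)| ≤ |μ_n(D)| < ∞, where μ_n(H) = {h ∈ H : h^n = 1}. Then |G/G^n| ≤ |μ_n(G)|, where G^n = {g^n : g ∈ G}. -/
/-!
Let `S = {d ∈ D | dⁿ ∈ G}` and `T = μₙ(D)`, so that `G ≤ G T ≤ S` and `μₙ(D/G) ≅ S/G`.
Since `d ↦ dⁿ` maps `S` onto `G` (by divisibility) and `G T` is the preimage of `Gⁿ`, we get
`S/(G T) ≅ G/Gⁿ`, while `G T/G ≅ T/(T ∩ G)` and `T ∩ G = μₙ(G)`. With `r = [T : T ∩ G]`, finite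
and positive because `T` is finite, this gives `|μₙ(D/G)| = r |G/Gⁿ|` and `|μₙ(D)| = r |μₙ(G)|`.
-/

open Subgroup

namespace Subgroup

theorem card_inf_mul_relIndex {α : Type*} [Group α] (H K : Subgroup α) :
    Nat.card ↥(H ⊓ K) * H.relIndex K = Nat.card K := by
  rw [← inf_relIndex_right, ← relIndex_bot_left, ← relIndex_bot_left K]
  exact relIndex_mul_relIndex _ _ _ bot_le inf_le_right

variable {D : Type*} [CommGroup D]

theorem card_setOf_pow_eq_one (G : Subgroup D) (n : ℕ) :
    Nat.card {x : G | x ^ n = 1} = Nat.card ↥(G ⊓ (powMonoidHom n : D →* D).ker) :=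
  Nat.card_congr <| (Equiv.subtypeEquivRight fun x : G => by
      rw [Set.mem_ofPred_eq, ← OneMemClass.coe_eq_one, SubmonoidClass.coe_pow]).trans
    (Equiv.subtypeSubtypeEquivSubtypeInter (· ∈ G) (fun x : D => x ^ n = 1))

theorem comap_pow_eq_comap_mk_ker_pow (G : Subgroup D) (n : ℕ) :
    G.comap (powMonoidHom n) = (powMonoidHom n : D ⧸ G →* _).ker.comap (QuotientGroup.mk' G) := by
  ext d
  simp [← QuotientGroup.mk_pow, QuotientGroup.eq_one_iff]

theorem card_setOf_pow_eq_one_quotient (G : Subgroup D) (n : ℕ) :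
    Nat.card {x : D ⧸ G | x ^ n = 1} = G.relIndex (G.comap (powMonoidHom n)) := by
  have h := relIndex_ker ((powMonoidHom n : D ⧸ G →* _).ker.comap (QuotientGroup.mk' G))
    (QuotientGroup.mk' G)
  rw [QuotientGroup.ker_mk', map_comap_eq_self_of_surjective (QuotientGroup.mk'_surjective G),
    ← comap_pow_eq_comap_mk_ker_pow] at h
  exact h.symm

theorem map_pow_subgroupOf_self (G : Subgroup D) (n : ℕ) :
    (G.map (powMonoidHom n)).subgroupOf G = (powMonoidHom n : G →* G).range := by
  ext g
  simp [mem_subgroupOf, Subtype.ext_iff]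

theorem relIndex_sup_ker_pow_comap_pow {G : Subgroup D} {n : ℕ}
    (hG : G ≤ (powMonoidHom n : D →* D).range) :
    (G ⊔ (powMonoidHom n : D →* D).ker).relIndex (G.comap (powMonoidHom n)) =
      Nat.card (G ⧸ (powMonoidHom n : G →* G).range) := by
  rw [← comap_map_eq, relIndex_comap, map_comap_eq_self hG, relIndex, map_pow_subgroupOf_self]
  rfl

end Subgroup

/-- Lemma `lm_herzog_inequ1`: if `G ⊆ D` with `D` divisible and
`|μ_n(D/G)| ≤ |μ_n(D)| < ∞`, then `|G/Gⁿ| ≤ |μ_n(G)|`. -/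
theorem card_quotient_pow_le_card_torsion {D : Type*} [CommGroup D]
    (hdiv : ∀ d : D, ∀ n : ℕ, 0 < n → ∃ x : D, x ^ n = d)
    (G : Subgroup D) (n : ℕ) (hn : 0 < n)
    (hfin : Finite {x : D | x ^ n = 1})
    (hle : Nat.card {x : D ⧸ G | x ^ n = 1} ≤ Nat.card {x : D | x ^ n = 1}) :
    Nat.card (G ⧸ (powMonoidHom n : G →* G).range) ≤ Nat.card {x : G | x ^ n = 1} := by
  set T := (powMonoidHom n : D →* D).ker
  have hT : Finite T := hfin
  have hG : G ≤ (powMonoidHom n : D →* D).range := fun g _ => hdiv g n hn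
  have hGT : G ⊔ T ≤ G.comap (powMonoidHom n) :=
    sup_le (fun g hg => G.pow_mem hg n) fun t ht => by simp [(MonoidHom.mem_ker).1 ht]
  have hquot : Nat.card {x : D ⧸ G | x ^ n = 1} =
      G.relIndex T * Nat.card (G ⧸ (powMonoidHom n : G →* G).range) := by
    rw [card_setOf_pow_eq_one_quotient, ← relIndex_mul_relIndex _ _ _ le_sup_left hGT,
      relIndex_sup_left, relIndex_sup_ker_pow_comap_pow hG]
  have htors : Nat.card {x : D | x ^ n = 1} = G.relIndex T * Nat.card {x : G | x ^ n = 1} := by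
    rw [card_setOf_pow_eq_one, mul_comm, card_inf_mul_relIndex]
    rfl
  have hpos : 0 < G.relIndex T := Nat.pos_of_ne_zero index_ne_zero_of_finite
  exact Nat.le_of_mul_le_mul_left (hquot ▸ htors ▸ hle) hpos
end

section
/- Let K be a field whose multiplicative group K^× is divisible, and let φ : K^× → K^× be a surjective group homomorphism. Then for every prime p, |(ker φ)[p]| = |ker φ / p(ker φ)| ≤ p, where G[p] denotes the p-torsion subgroup and pG the subgroup of p-th powers (written additively: multiples). -/
/-!
Let `N = ker φ` and write `G[p]` for the `p`-torsion of an abelian group `G`. The snake lemma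
for `p`-th powers on `1 → N → K^× → K^× → 1` gives the exact sequence
`1 → N[p] → K^×[p] → K^×[p] → N / N^p → K^× / (K^×)^p = 1`, whose middle map is `φ` and
whose connecting map sends `φ a` to the class of `a^p`. The endomorphism `φ` of the finite group
`K^×[p] = μ_p(K)` has kernel and cokernel of the same order, so `|N[p]| = |N / N^p|`, and both
are at most `|μ_p(K)| ≤ p`.
-/

open Function

namespace MonoidHom

variable {A B : Type*} [CommGroup A] [CommGroup B]

def restrictTorsion (φ : A →* B) (n : ℕ) :
    (powMonoidHom n : A →* A).ker →* (powMonoidHom n : B →* B).ker :=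
  (φ.comp (powMonoidHom n : A →* A).ker.subtype).codRestrict _ fun a => by
    rw [mem_ker, powMonoidHom_apply, comp_apply, ← map_pow]
    exact (congrArg φ a.2).trans φ.map_one

def kerRestrictTorsionEquiv (φ : A →* B) (n : ℕ) :
    (φ.restrictTorsion n).ker ≃ {g : φ.ker | g ^ n = 1} where
  toFun a := ⟨⟨a.1.1, congrArg Subtype.val a.2⟩, Subtype.ext a.1.2⟩
  invFun g := ⟨⟨g.1.1, congrArg Subtype.val g.2⟩, Subtype.ext g.1.2⟩

section Connecting

variable {φ : A →* B} (n : ℕ)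

lemma pow_mem_ker_iff {a : A} : a ^ n ∈ φ.ker ↔ φ a ∈ (powMonoidHom n : B →* B).ker := by
  rw [mem_ker, mem_ker, map_pow, powMonoidHom_apply]

lemma mk_pow_eq_mk_pow_of_map_eq {a a' : A} (h : φ a = φ a') (ha : a ^ n ∈ φ.ker)
    (ha' : a' ^ n ∈ φ.ker) :
    (QuotientGroup.mk ⟨a ^ n, ha⟩ : φ.ker ⧸ (powMonoidHom n : φ.ker →* φ.ker).range) =
      QuotientGroup.mk ⟨a' ^ n, ha'⟩ := by
  rw [QuotientGroup.eq]
  have hker : a⁻¹ * a' ∈ φ.ker := by rw [mem_ker, map_mul, map_inv, h, inv_mul_cancel]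
  exact ⟨⟨a⁻¹ * a', hker⟩, Subtype.ext (by simp [mul_pow])⟩

variable (hφ : Surjective φ)

noncomputable def torsionConnecting :
    (powMonoidHom n : B →* B).ker →* φ.ker ⧸ (powMonoidHom n : φ.ker →* φ.ker).range where
  toFun b := QuotientGroup.mk
    ⟨surjInv hφ b ^ n, (pow_mem_ker_iff n).2 (by rw [surjInv_eq hφ]; exact b.2)⟩
  map_one' := by
    rw [mk_pow_eq_mk_pow_of_map_eq n (a' := 1) (by rw [surjInv_eq hφ, map_one]; rfl) _ (by simp)]
    simp only [one_pow]
    rfl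
  map_mul' b b' := by
    have hmul : (surjInv hφ b * surjInv hφ b') ^ n ∈ φ.ker :=
      (pow_mem_ker_iff n).2 (by simpa [surjInv_eq] using mul_mem b.2 b'.2)
    rw [← QuotientGroup.mk_mul, mk_pow_eq_mk_pow_of_map_eq n (by simp [surjInv_eq]) _ hmul]
    exact congrArg _ (Subtype.ext (mul_pow _ _ n))

lemma torsionConnecting_eq {a : A} {b : (powMonoidHom n : B →* B).ker} (h : φ a = b) :
    torsionConnecting n hφ b = QuotientGroup.mk ⟨a ^ n, (pow_mem_ker_iff n).2 (h ▸ b.2)⟩ :=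
  mk_pow_eq_mk_pow_of_map_eq n ((surjInv_eq hφ b).trans h.symm) _ _

lemma torsionConnecting_surjective (hpow : ∀ a : A, ∃ c : A, c ^ n = a) :
    Surjective (torsionConnecting n hφ) := by
  rintro ⟨g⟩
  obtain ⟨c, hc⟩ := hpow g
  have hc' : c ^ n ∈ φ.ker := hc ▸ g.2
  refine ⟨⟨φ c, (pow_mem_ker_iff n).1 hc'⟩, ?_⟩
  rw [torsionConnecting_eq n hφ rfl]
  exact congrArg _ (Subtype.ext hc)

lemma ker_torsionConnecting : (torsionConnecting n hφ).ker = (φ.restrictTorsion n).range := by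
  ext b
  constructor
  · intro hb
    obtain ⟨a, ha⟩ := hφ b
    rw [mem_ker, torsionConnecting_eq n hφ ha, QuotientGroup.eq_one_iff] at hb
    obtain ⟨g, hg⟩ := hb
    have hgn : (g : A) ^ n = a ^ n := congrArg Subtype.val hg
    refine ⟨⟨a * (g : A)⁻¹, ?_⟩, Subtype.ext ?_⟩
    · rw [mem_ker, powMonoidHom_apply, mul_pow, inv_pow, hgn, mul_inv_cancel]
    · change φ (a * (g : A)⁻¹) = b
      rw [map_mul, map_inv, mem_ker.1 g.2, inv_one, mul_one, ha]
  · rintro ⟨t, rfl⟩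
    rw [mem_ker, torsionConnecting_eq n hφ (a := t) rfl, QuotientGroup.eq_one_iff]
    exact ⟨1, Subtype.ext ((one_pow n).trans (mem_ker.1 t.2).symm)⟩

end Connecting

theorem card_quotient_range_pow_ker {φ : A →* B} (hφ : Surjective φ) (n : ℕ)
    (hpow : ∀ a : A, ∃ c : A, c ^ n = a) :
    Nat.card (φ.ker ⧸ (powMonoidHom n : φ.ker →* φ.ker).range) =
      (φ.restrictTorsion n).range.index := by
  rw [← ker_torsionConnecting n hφ, Subgroup.index]
  exact Nat.card_congr (QuotientGroup.quotientKerEquivOfSurjective _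
    (torsionConnecting_surjective n hφ hpow)).toEquiv.symm

theorem card_torsion_ker_eq_card_quotient_range_pow {φ : A →* A} (hφ : Surjective φ) (n : ℕ)
    (hpow : ∀ a : A, ∃ c : A, c ^ n = a) [Finite (powMonoidHom n : A →* A).ker] :
    Nat.card {g : φ.ker | g ^ n = 1} =
      Nat.card (φ.ker ⧸ (powMonoidHom n : φ.ker →* φ.ker).range) := by
  rw [card_quotient_range_pow_ker hφ n hpow, Subgroup.index_range,
    Nat.card_congr (φ.kerRestrictTorsionEquiv n)]

end MonoidHom

/-- If `K^×` is divisible and `φ : K^× → K^×` is a surjective homomorphism, then for every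
prime `p`, `|(ker φ)[p]| = |ker φ / (ker φ)^p| ≤ p`. -/
theorem ker_surjective_endo_torsion_card {K : Type*} [Field K]
    (hdiv : ∀ x : Kˣ, ∀ n : ℕ, 0 < n → ∃ y : Kˣ, y ^ n = x)
    (φ : Kˣ →* Kˣ) (hsurj : Function.Surjective φ) :
    ∀ p : ℕ, p.Prime →
      Nat.card {g : φ.ker | g ^ p = 1} =
          Nat.card (φ.ker ⧸ (powMonoidHom p : φ.ker →* φ.ker).range) ∧
        Nat.card {g : φ.ker | g ^ p = 1} ≤ p := by
  intro p hp
  have : NeZero p := ⟨hp.ne_zero⟩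
  have htorsion : (powMonoidHom p : Kˣ →* Kˣ).ker = rootsOfUnity p K := rootsOfUnity_eq_ker.symm
  have : Finite (powMonoidHom p : Kˣ →* Kˣ).ker := htorsion ▸ inferInstance
  refine ⟨MonoidHom.card_torsion_ker_eq_card_quotient_range_pow hsurj p (hdiv · p hp.pos), ?_⟩
  calc Nat.card {g : φ.ker | g ^ p = 1}
      = Nat.card (φ.restrictTorsion p).ker := (Nat.card_congr (φ.kerRestrictTorsionEquiv p)).symm
    _ ≤ Nat.card (powMonoidHom p : Kˣ →* Kˣ).ker := Subgroup.card_le_card_group _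
    _ ≤ p := htorsion ▸ card_rootsOfUnity K p
end

section
/- Let (K, θ) be an existentially closed model of the theory T of algebraically closed fields equipped with a multiplicative map θ (θ(xy) = θ(x)θ(y), θ(1) = 1, θ(x) = 0 iff x = 0). Then θ : K^× → K^× is surjective. -/
open FirstOrder

/-- The language of fields together with one extra unary function symbol `θ`:
two constants (`0`, `1`), two unary functions (`-`, `θ`), two binary functions (`+`, `*`). -/
def thetaFieldLang : FirstOrder.Language where
  Functions n :=
    match n with
    | 0 => Fin 2
    | 1 => Fin 2
    | 2 => Fin 2
    | _ + 3 => Empty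
  Relations _ := Empty

/-- The `thetaFieldLang`-structure on a field `K` equipped with a map `θ : K → K`. -/
def thetaFieldStr (K : Type*) [Field K] (θ : K → K) : thetaFieldLang.Structure K where
  funMap {n} f x :=
    match n, f, x with
    | 0, f, _ => if (show Fin 2 from f) = 0 then (0 : K) else 1
    | 1, f, x => if (show Fin 2 from f) = 0 then -x 0 else θ (x 0)
    | 2, f, x => if (show Fin 2 from f) = 0 then x 0 + x 1 else x 0 * x 1
    | _ + 3, f, _ => f.elim
  RelMap {_} r _ := r.elim

/-!
Take `L = K(t)^alg`. As `t` is transcendental over `K`, the subgroup `Kˣ · tᶻ` of `Lˣ` is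
isomorphic to `Kˣ × ℤ`, so `θ` together with `t ↦ y` is a homomorphism on it. Since `L` is
algebraically closed, `Lˣ` is divisible, hence injective as an abelian group, and this
homomorphism extends to all of `Lˣ`, giving a multiplicative `θ_L` on `L` extending `θ` with
`θ_L(t) = y`. The quantifier-free formula `θ(x) = y` is thus satisfied in `(L, θ_L)`, hence in
`(K, θ)` by existential closedness.
-/

theorem IsAlgebraic.of_zpow {K L : Type*} [Field K] [Field L] [Algebra K L] {x : L} {n : ℤ}
    (hn : n ≠ 0) (h : IsAlgebraic K (x ^ n)) : IsAlgebraic K x := by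
  rcases Int.natAbs_eq n with hpos | hneg
  · rw [hpos, zpow_natCast] at h
    exact h.of_pow (Int.natAbs_pos.2 hn)
  · rw [hneg, zpow_neg, zpow_natCast, IsAlgebraic.inv_iff] at h
    exact h.of_pow (Int.natAbs_pos.2 hn)

theorem Transcendental.injective_coprod_zpowersHom {K L : Type*} [Field K] [Field L]
    [Algebra K L] {t : Lˣ} (ht : Transcendental K (t : L)) :
    Function.Injective ((Units.map (algebraMap K L : K →* L)).coprod (zpowersHom Lˣ t)) := by
  rw [injective_iff_map_eq_one]
  rintro ⟨c, n⟩ h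
  have htn : t ^ n.toAdd = Units.map (algebraMap K L : K →* L) c⁻¹ := by
    rw [map_inv]
    exact eq_inv_of_mul_eq_one_right h
  have hn : n = 1 := by
    by_contra hn
    refine ht (.of_zpow (n := n.toAdd) hn ?_)
    rw [← Units.val_zpow_eq_zpow_val, htn]
    exact isAlgebraic_algebraMap _
  subst hn
  rw [toAdd_one, zpow_zero, eq_comm, map_inv, inv_eq_one] at htn
  rw [Units.map_injective (algebraMap K L).injective (htn.trans (map_one _).symm)]
  rfl

theorem IsAlgClosed.surjective_units_pow {L : Type*} [Field L] [IsAlgClosed L] {n : ℕ}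
    (hn : n ≠ 0) : Function.Surjective fun u : Lˣ ↦ u ^ n := by
  intro u
  obtain ⟨z, hz⟩ := IsAlgClosed.exists_pow_nat_eq (u : L) (Nat.pos_of_ne_zero hn)
  have hz0 : z ≠ 0 := by
    rintro rfl
    exact u.ne_zero (by rw [← hz, zero_pow hn])
  exact ⟨Units.mk0 z hz0, Units.ext (by simp [hz])⟩

theorem IsAlgClosed.exists_monoidHom_comp_eq {A B L : Type*} [CommGroup A] [CommGroup B]
    [Field L] [IsAlgClosed L] {i : A →* B} (hi : Function.Injective i) (g : A →* Lˣ) :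
    ∃ Θ : B →* Lˣ, Θ.comp i = g := by
  let : DivisibleBy (Additive Lˣ) ℕ := divisibleByOfSMulRightSurj _ _ fun hn a ↦ by
    obtain ⟨v, hv⟩ := surjective_units_pow hn a.toMul
    exact ⟨Additive.ofMul v, congrArg Additive.ofMul hv⟩
  let := AddGroup.divisibleByIntOfDivisibleByNat (Additive Lˣ)
  obtain ⟨Θ, hΘ⟩ := (Module.Baer.of_divisible _).extension_property_addMonoidHom
    (MonoidHom.toAdditive i) hi (MonoidHom.toAdditive g)
  exact ⟨MonoidHom.toAdditive.symm Θ, MonoidHom.ext fun a ↦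
    congrArg Additive.toMul (DFunLike.congr_fun hΘ (Additive.ofMul a))⟩

theorem MonoidHom.exists_monoidWithZeroHom_apply_val {G₀ H₀ : Type*} [GroupWithZero G₀]
    [GroupWithZero H₀] (Θ : G₀ˣ →* H₀ˣ) : ∃ θ : G₀ →*₀ H₀, ∀ u : G₀ˣ, θ u = Θ u := by
  classical
  refine ⟨(MonoidWithZeroHom.ofClass WithZero.withZeroUnitsEquiv).comp
    ((WithZero.map' Θ).comp (.ofClass WithZero.withZeroUnitsEquiv.symm)), fun u ↦ ?_⟩
  simp

theorem Transcendental.exists_monoidWithZeroHom_extend {K L : Type*} [Field K] [Field L]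
    [IsAlgClosed L] [Algebra K L] {t : L} (ht : Transcendental K t) (θ : K →*₀ L) {y : L}
    (hy : y ≠ 0) :
    ∃ θL : L →*₀ L, (∀ x : K, θL (algebraMap K L x) = θ x) ∧ θL t = y := by
  let tu := Units.mk0 t fun h ↦ ht (h ▸ isAlgebraic_zero)
  let i := (Units.map (algebraMap K L : K →* L)).coprod (zpowersHom Lˣ tu)
  obtain ⟨Θ, hΘ⟩ := IsAlgClosed.exists_monoidHom_comp_eq (i := i)
    (Transcendental.injective_coprod_zpowersHom ht)
    ((Units.map (θ : K →* L)).coprod (zpowersHom Lˣ (Units.mk0 y hy)))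
  obtain ⟨θL, hθL⟩ := Θ.exists_monoidWithZeroHom_apply_val
  have hθL_mul_zpow (c : Kˣ) (n : ℤ) : θL (algebraMap K L c * t ^ n) = θ c * y ^ n := by
    have := hθL (i (c, .ofAdd n))
    rw [← MonoidHom.comp_apply, hΘ] at this
    simpa [i, tu] using this
  refine ⟨θL, fun x ↦ ?_, by simpa using hθL_mul_zpow 1 1⟩
  rcases eq_or_ne x 0 with rfl | hx
  · simp
  · simpa using hθL_mul_zpow (.mk0 x hx) 0

open FirstOrder.Language in
/-- `(1 : Fin 2)` is the symbol `θ` among the unary function symbols. -/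
def thetaPreimageFormula {K : Type*} (y : K) : thetaFieldLang.Formula (K ⊕ Fin 1) :=
  Term.equal
    (Term.func (show thetaFieldLang.Functions 1 from (1 : Fin 2)) ![Term.var (Sum.inr 0)])
    (Term.var (Sum.inl y))

theorem isQF_thetaPreimageFormula {K : Type*} (y : K) : (thetaPreimageFormula y).IsQF :=
  (Language.BoundedFormula.IsAtomic.equal _ _).isQF

theorem realize_thetaPreimageFormula {K M : Type*} [Field M] (θM : M → M) (y : K)
    (v : K ⊕ Fin 1 → M) :
    (letI := thetaFieldStr M θM; (thetaPreimageFormula y).Realize v) ↔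
      θM (v (Sum.inr 0)) = v (Sum.inl y) :=
  Iff.rfl

/-- If `(K, θ)` is an existentially closed model of the theory `T` of algebraically closed
fields with a multiplicative map `θ`, then `θ : K^× → K^×` is surjective. -/
theorem theta_surjective_of_existentially_closed {K : Type} [Field K] [IsAlgClosed K]
    (θ : K → K)
    (hmul : ∀ x y : K, θ (x * y) = θ x * θ y) (hone : θ 1 = 1)
    (hzero : ∀ x : K, θ x = 0 ↔ x = 0)
    (hec : ∀ (L : Type) [Field L] [IsAlgClosed L] (θL : L → L) (f : K →+* L),
      (∀ x y : L, θL (x * y) = θL x * θL y) → θL 1 = 1 → (∀ x : L, θL x = 0 ↔ x = 0) →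
      (∀ x : K, θL (f x) = f (θ x)) →
      ∀ (m : ℕ) (φ : thetaFieldLang.Formula (K ⊕ Fin m)), φ.IsQF →
        (∃ xs : Fin m → L,
          letI := thetaFieldStr L θL
          φ.Realize (Sum.elim (⇑f) xs)) →
        ∃ xs : Fin m → K,
          letI := thetaFieldStr K θ
          φ.Realize (Sum.elim id xs)) :
    ∀ y : K, y ≠ 0 → ∃ x : K, θ x = y := by
  intro y hy
  let θ₀ : K →*₀ K :=
    { toFun := θ, map_zero' := (hzero 0).2 rfl, map_one' := hone, map_mul' := hmul }
  let L := AlgebraicClosure (RatFunc K)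
  have ht : Transcendental K (algebraMap (RatFunc K) L RatFunc.X) :=
    (transcendental_algebraMap_iff (algebraMap (RatFunc K) L).injective).2
      RatFunc.transcendental_X
  obtain ⟨θL, hθL_algebraMap, hθL_t⟩ := ht.exists_monoidWithZeroHom_extend
    ((algebraMap K L).toMonoidWithZeroHom.comp θ₀) ((map_ne_zero (algebraMap K L)).2 hy)
  obtain ⟨xs, hxs⟩ := hec L θL (algebraMap K L) (map_mul θL) (map_one θL)
    (fun _ ↦ map_eq_zero θL) hθL_algebraMap 1 (thetaPreimageFormula y)
    (isQF_thetaPreimageFormula y) ⟨![_], (realize_thetaPreimageFormula ..).2 hθL_t⟩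
  exact ⟨xs 0, (realize_thetaPreimageFormula ..).1 hxs⟩
end
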